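/- Let V be a finite-dimensional real vector space and ω̂ a scalar polylagrangian (k+1)-form on V of rank N with polylagrangian subspace L. Then every isotropic subspace L̃ of V that contains ker ω̂ and satisfies dim L̃ > dim ker ω̂ + C(N−1, k) + 1 is contained in L. In particular, if N > k > 1, the polylagrangian subspace L is unique. -/

import Mathlib

open Module

/-- `L` is a polylagrangian subspace for the scalar `(k+1)`-form `ω`. -/
def IsPolyLag {V : Type*} [AddCommGroup V] [Module ℝ V]
    {k : ℕ} (ω : V [⋀^Fin (k+1)]→ₗ[ℝ] ℝ) (L : Submodule ℝ V) : Prop :=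
  ∀ α : V [⋀^Fin k]→ₗ[ℝ] ℝ,
    (∃ v ∈ L, ∀ x : Fin k → V, ω (Fin.cons v x) = α x)
      ↔ ∀ (x : Fin k → V) (i : Fin k), x i ∈ L → α x = 0

/-!
Write `ω♭ = ω.curryLeft`. It maps `L` onto `Λ^k L^⊥`, of dimension `C(N, k)`, and an isotropic
`L'` into `Λ^k L'^⊥`. Suppose `L' ⊄ L` and let `d = dim L' - dim (L ∩ L') ≥ 1`. Since `ω♭` maps
`L ∩ L'` into `Λ^k (L + L')^⊥`, we get `dim (L ∩ L') ≤ dim ker ω♭ + C(N - d, k)`, which contradicts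
the lower bound on `dim L'` as soon as `d = 1` or `k = 1`. For `2 ≤ k ≤ N`, `d ≥ 2` is impossible:
two vectors `v, w ∈ L'` independent modulo `L` extend to `k` vectors on which some form of
`Λ^k L^⊥ = ω♭(L)` equals `1`, so `ω (u, v, w, …) = 1` for some `u`, against isotropy. For `k > N`,
`Λ^k L^⊥ = 0` forces `L ⊆ ker ω♭ ⊆ L'`, and then `ω♭(L') ⊆ Λ^k L'^⊥ = 0`.

A polylagrangian `L'` of rank `N` contains `ker ω♭` and has dimension `dim ker ω♭ + C(N, k)`,
which beats the bound when `1 < k < N`; so `L` and `L'` contain each other.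
-/

theorem Nat.choose_sub_one_add_one_lt_choose {n k : ℕ} (hk : k + 2 < n) :
    (n - 1).choose (k + 2) + 1 < n.choose (k + 2) := by
  obtain ⟨m, rfl⟩ : ∃ m, n = m + 3 := ⟨n - 3, by omega⟩
  rw [show m + 3 - 1 = m + 2 from rfl]
  have e1 : (m + 3).choose (k + 2) = (m + 2).choose (k + 1) + (m + 2).choose (k + 2) :=
    Nat.choose_succ_succ' _ _
  have e2 : (m + 2).choose (k + 1) = (m + 1).choose k + (m + 1).choose (k + 1) :=
    Nat.choose_succ_succ' _ _
  have h1 := Nat.choose_pos (show k ≤ m + 1 by omega)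
  have h2 := Nat.choose_pos (show k + 1 ≤ m + 1 by omega)
  omega

section LinearAlgebra

variable {K V W : Type*} [Field K] [AddCommGroup V] [Module K V] [AddCommGroup W] [Module K W]

instance AlternatingMap.finiteDimensional [FiniteDimensional K W] (k : ℕ) :
    FiniteDimensional K (W [⋀^Fin k]→ₗ[K] K) :=
  Module.Finite.equiv exteriorPower.alternatingMapLinearEquiv.symm

theorem finrank_alternatingMap [FiniteDimensional K W] (k : ℕ) :
    finrank K (W [⋀^Fin k]→ₗ[K] K) = (finrank K W).choose k := by
  rw [exteriorPower.alternatingMapLinearEquiv.finrank_eq, Subspace.dual_finrank_eq,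
    exteriorPower.finrank_eq]

theorem exists_alternatingMap_apply_eq_one {k : ℕ} {v : Fin k → W}
    (hv : LinearIndependent K v) : ∃ f : W [⋀^Fin k]→ₗ[K] K, f v = 1 := by
  obtain ⟨p, hp⟩ := (Submodule.span K (Set.range v)).subtype.exists_leftInverse_of_injective
    (Submodule.ker_subtype _)
  refine ⟨(Basis.span hv).det.compLinearMap p, ?_⟩
  have hpv : (fun i => p (v i)) = Basis.span hv := by
    ext1 i
    rw [← Basis.coe_span_apply hv i]
    exact LinearMap.congr_fun hp _
  rw [AlternatingMap.compLinearMap_apply, hpv, Basis.det_self]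

theorem Submodule.exists_extend_linearIndependent_mkQ (M : Submodule K V) {m n : ℕ}
    (hmn : m ≤ n) (hn : n ≤ finrank K (V ⧸ M)) {t : Fin m → V}
    (ht : LinearIndependent K (M.mkQ ∘ t)) :
    ∃ c : Fin n → V, (∀ i, c (Fin.castLE hmn i) = t i) ∧ LinearIndependent K (M.mkQ ∘ c) := by
  induction n, hmn using Nat.le_induction with
  | base => exact ⟨t, fun _ => rfl, ht⟩
  | succ n hmn ih =>
    obtain ⟨c, hct, hc⟩ := ih (by omega)
    obtain ⟨x, hx⟩ := exists_linearIndependent_snoc_of_lt_finrank hc (by omega)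
    obtain ⟨y, rfl⟩ := M.mkQ_surjective x
    refine ⟨Fin.snoc c y, fun i => ?_, by rwa [Fin.comp_snoc]⟩
    rw [← hct i]
    exact Fin.snoc_castSucc (α := fun _ => V) (p := c) (x := y) (Fin.castLE hmn i)

theorem Submodule.finrank_map_add_finrank_inf_ker [FiniteDimensional K V] (f : V →ₗ[K] W)
    (P : Submodule K V) :
    finrank K (P.map f) + finrank K (P ⊓ LinearMap.ker f : Submodule K V) = finrank K P := by
  rw [← LinearMap.range_domRestrict, ← (f.domRestrict P).finrank_range_add_finrank_ker,
    LinearMap.ker_domRestrict, ← Submodule.finrank_map_subtype_eq, Submodule.map_comap_subtype]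

/-- The paper's `Λ^k M^⊥`. -/
def formsVanishingOn (M : Submodule K V) (k : ℕ) : Submodule K (V [⋀^Fin k]→ₗ[K] K) where
  carrier := {α | ∀ (x : Fin k → V) (i : Fin k), x i ∈ M → α x = 0}
  add_mem' hα hβ x i hx := by simp [hα x i hx, hβ x i hx]
  zero_mem' _ _ _ := rfl
  smul_mem' c _ hα x i hx := by simp [hα x i hx]

section FormsVanishingOn

variable {M : Submodule K V} {k : ℕ}

theorem compLinearMap_mkQ_mem_formsVanishingOn (f : (V ⧸ M) [⋀^Fin k]→ₗ[K] K) :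
    f.compLinearMap M.mkQ ∈ formsVanishingOn M k := fun _ i hx =>
  f.map_coord_zero i ((Submodule.Quotient.mk_eq_zero M).mpr hx)

theorem apply_eq_of_mem_formsVanishingOn {α : V [⋀^Fin k]→ₗ[K] K}
    (hα : α ∈ formsVanishingOn M k) {x y : Fin k → V} (hxy : ∀ i, x i - y i ∈ M) :
    α x = α y := by
  have hx : x = y + (x - y) := by abel
  rw [hx, ← AlternatingMap.coe_multilinearMap, MultilinearMap.map_add_univ,
    Finset.sum_eq_single Finset.univ]
  · simp
  · intro s _ hs
    obtain ⟨i, hi⟩ : ∃ i, i ∉ s := by simpa [Finset.eq_univ_iff_forall] using hs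
    exact hα _ i (by simpa [hi] using hxy i)
  · simp

theorem finrank_formsVanishingOn [FiniteDimensional K V] (M : Submodule K V) (k : ℕ) :
    finrank K (formsVanishingOn M k) = (finrank K (V ⧸ M)).choose k := by
  obtain ⟨s, hs⟩ := M.mkQ.exists_rightInverse_of_surjective M.range_mkQ
  let e : ((V ⧸ M) [⋀^Fin k]→ₗ[K] K) →ₗ[K] formsVanishingOn M k :=
    { toFun f := ⟨f.compLinearMap M.mkQ, compLinearMap_mkQ_mem_formsVanishingOn f⟩
      map_add' _ _ := rfl
      map_smul' _ _ := rfl }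
  have he : Function.Bijective e := by
    refine ⟨fun f g hfg => AlternatingMap.compLinearMap_injective _ M.mkQ_surjective
      (congrArg Subtype.val hfg), fun α => ⟨α.1.compLinearMap s, Subtype.ext ?_⟩⟩
    ext x
    refine apply_eq_of_mem_formsVanishingOn α.2 fun i => ?_
    rw [← Submodule.Quotient.mk_eq_zero, Submodule.Quotient.mk_sub]
    exact sub_eq_zero.mpr (LinearMap.congr_fun hs _)
  rw [← (LinearEquiv.ofBijective e he).finrank_eq, finrank_alternatingMap]

theorem formsVanishingOn_sup (M M' : Submodule K V) (k : ℕ) :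
    formsVanishingOn (M ⊔ M') k = formsVanishingOn M k ⊓ formsVanishingOn M' k := by
  ext α
  refine ⟨fun hα => ⟨fun x i hx => hα x i (Submodule.mem_sup_left hx),
    fun x i hx => hα x i (Submodule.mem_sup_right hx)⟩, fun ⟨hM, hM'⟩ x i hx => ?_⟩
  obtain ⟨a, ha, b, hb, hab⟩ := Submodule.mem_sup.mp hx
  rw [← Function.update_eq_self i x, ← hab, AlternatingMap.map_update_add,
    hM _ i (by simpa using ha), hM' _ i (by simpa using hb), add_zero]

end FormsVanishingOn

def IsIsotropic {n : ℕ} (ω : V [⋀^Fin (n+1)]→ₗ[K] K) (L : Submodule K V) : Prop :=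
  ∀ x : Fin (n+1) → V, x 0 ∈ L → x 1 ∈ L → ω x = 0

theorem AlternatingMap.map_comp_swap_eq_zero_iff {ι : Type*} [DecidableEq ι]
    (f : V [⋀^ι]→ₗ[K] W) (x : ι → V) (i j : ι) : f (x ∘ Equiv.swap i j) = 0 ↔ f x = 0 := by
  rcases eq_or_ne i j with rfl | hij
  · simp
  · rw [f.map_swap x hij, neg_eq_zero]

theorem IsIsotropic.apply_eq_zero {n : ℕ} {ω : V [⋀^Fin (n+1)]→ₗ[K] K} {L : Submodule K V}
    (hL : IsIsotropic ω L) {x : Fin (n+1) → V} {i j : Fin (n+1)} (hij : i ≠ j)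
    (hi : x i ∈ L) (hj : x j ∈ L) : ω x = 0 := by
  cases n with
  | zero => exact absurd (Subsingleton.elim (α := Fin 1) i j) hij
  | succ n =>
    set j' := Equiv.swap 0 i j
    have hj' : j' ≠ 0 := by
      simpa [j', Equiv.swap_apply_eq_iff] using hij.symm
    rw [← ω.map_comp_swap_eq_zero_iff x 0 i, ← ω.map_comp_swap_eq_zero_iff _ 1 j']
    apply hL
    · simpa [Equiv.swap_apply_of_ne_of_ne Fin.zero_ne_one hj'.symm] using hi
    · simpa [j'] using hj

theorem IsIsotropic.map_curryLeft_le {n : ℕ} {ω : V [⋀^Fin (n+1)]→ₗ[K] K}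
    {L : Submodule K V} (hL : IsIsotropic ω L) :
    L.map ω.curryLeft ≤ formsVanishingOn L n := by
  rintro _ ⟨u, hu, rfl⟩ x i hx
  exact hL.apply_eq_zero (Fin.succ_ne_zero i).symm (by simpa using hu) (by simpa using hx)

theorem AlternatingMap.apply_eq_zero_of_mem_ker_curryLeft {n : ℕ}
    {ω : V [⋀^Fin (n+1)]→ₗ[K] W} {v : V} (hv : v ∈ LinearMap.ker ω.curryLeft)
    {x : Fin (n+1) → V} {i : Fin (n+1)} (hx : x i = v) : ω x = 0 := by
  rw [← ω.map_comp_swap_eq_zero_iff x 0 i, ← Fin.cons_self_tail (x ∘ _), Function.comp_apply,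
    Equiv.swap_apply_left, hx]
  exact DFunLike.congr_fun (LinearMap.mem_ker.mp hv) _

theorem finrank_le_finrank_ker_curryLeft_add_choose [FiniteDimensional K V] {n : ℕ}
    {ω : V [⋀^Fin (n+1)]→ₗ[K] K} {P M : Submodule K V}
    (h : P.map ω.curryLeft ≤ formsVanishingOn M n) :
    finrank K P ≤ finrank K (LinearMap.ker ω.curryLeft) + (finrank K (V ⧸ M)).choose n := by
  have hrank := Submodule.finrank_map_add_finrank_inf_ker ω.curryLeft P
  have hmap := Submodule.finrank_mono h
  have hker := Submodule.finrank_mono (inf_le_right : P ⊓ LinearMap.ker ω.curryLeft ≤ _)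
  rw [finrank_formsVanishingOn] at hmap
  omega

end LinearAlgebra

section PolyLag

variable {V : Type*} [AddCommGroup V] [Module ℝ V] {k : ℕ}

theorem IsPolyLag.map_curryLeft {ω : V [⋀^Fin (k+1)]→ₗ[ℝ] ℝ} {L : Submodule ℝ V}
    (hL : IsPolyLag ω L) : L.map ω.curryLeft = formsVanishingOn L k := by
  ext α
  refine Iff.trans ?_ (hL α)
  simp only [Submodule.mem_map, AlternatingMap.ext_iff]
  rfl

theorem IsPolyLag.isIsotropic {ω : V [⋀^Fin (k+2)]→ₗ[ℝ] ℝ} {L : Submodule ℝ V}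
    (hL : IsPolyLag ω L) : IsIsotropic ω L := fun x h0 h1 => by
  rw [← Fin.cons_self_tail x]
  exact (hL.map_curryLeft ▸ Submodule.mem_map_of_mem h0 : _ ∈ formsVanishingOn L (k+1))
    (Fin.tail x) 0 h1

theorem IsPolyLag.exists_apply_cons_eq_one {ω : V [⋀^Fin (k+1)]→ₗ[ℝ] ℝ} {L : Submodule ℝ V}
    (hL : IsPolyLag ω L) {m : ℕ} (hmk : m ≤ k) (hk : k ≤ finrank ℝ (V ⧸ L)) {t : Fin m → V}
    (ht : LinearIndependent ℝ (L.mkQ ∘ t)) :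
    ∃ u, ∃ c : Fin k → V, (∀ i, c (Fin.castLE hmk i) = t i) ∧ ω (Fin.cons u c) = 1 := by
  obtain ⟨c, hct, hc⟩ := L.exists_extend_linearIndependent_mkQ hmk hk ht
  obtain ⟨f, hf⟩ := exists_alternatingMap_apply_eq_one hc
  have hfL : f.compLinearMap L.mkQ ∈ L.map ω.curryLeft :=
    hL.map_curryLeft ▸ compLinearMap_mkQ_mem_formsVanishingOn f
  obtain ⟨u, -, hu⟩ := hfL
  exact ⟨u, c, hct, (DFunLike.congr_fun hu c).trans hf⟩

theorem IsPolyLag.ker_curryLeft_le [FiniteDimensional ℝ V] {ω : V [⋀^Fin (k+2)]→ₗ[ℝ] ℝ}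
    {L : Submodule ℝ V} (hL : IsPolyLag ω L) (hk : k + 1 ≤ finrank ℝ (V ⧸ L)) :
    LinearMap.ker ω.curryLeft ≤ L := by
  intro v hv
  by_contra hvL
  have ht : LinearIndependent ℝ (L.mkQ ∘ ![v]) :=
    .of_subsingleton 0 (by simpa [Submodule.Quotient.mk_eq_zero] using hvL)
  have h1k : 1 ≤ k + 1 := by omega
  obtain ⟨u, c, hct, hc⟩ := hL.exists_apply_cons_eq_one h1k hk ht
  have hc0 : ω (Fin.cons u c) = 0 :=
    ω.apply_eq_zero_of_mem_ker_curryLeft hv (i := (Fin.castLE h1k 0).succ) (hct 0)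
  exact zero_ne_one (hc0.symm.trans hc)

theorem IsPolyLag.finrank_map_mkQ_le_one [FiniteDimensional ℝ V] {ω : V [⋀^Fin (k+3)]→ₗ[ℝ] ℝ}
    {L L' : Submodule ℝ V} (hL : IsPolyLag ω L) (hL' : IsIsotropic ω L')
    (hk : k + 2 ≤ finrank ℝ (V ⧸ L)) : finrank ℝ (L'.map L.mkQ) ≤ 1 := by
  by_contra! h2
  obtain ⟨w, hw⟩ := exists_linearIndependent_of_le_finrank (R := ℝ) (n := 2) h2
  choose t htL' htw using fun i => Submodule.mem_map.mp (w i).2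
  have ht : LinearIndependent ℝ (L.mkQ ∘ t) := by
    rw [show L.mkQ ∘ t = Submodule.subtype _ ∘ w from funext htw]
    exact hw.map' _ (Submodule.ker_subtype _)
  have h2k : 2 ≤ k + 2 := by omega
  obtain ⟨u, c, hct, hc⟩ := hL.exists_apply_cons_eq_one h2k hk ht
  have hc0 : ω (Fin.cons u c) = 0 :=
    hL'.apply_eq_zero (i := (Fin.castLE h2k 0).succ) (j := (Fin.castLE h2k 1).succ)
      ((Fin.succ_injective _).ne ((Fin.castLE_injective h2k).ne (by decide)))
      ((hct 0).symm ▸ htL' 0 : c (Fin.castLE h2k 0) ∈ L')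
      ((hct 1).symm ▸ htL' 1 : c (Fin.castLE h2k 1) ∈ L')
  exact zero_ne_one (hc0.symm.trans hc)

theorem IsPolyLag.finrank_eq [FiniteDimensional ℝ V] {ω : V [⋀^Fin (k+1)]→ₗ[ℝ] ℝ}
    {L : Submodule ℝ V} (hL : IsPolyLag ω L) (hker : LinearMap.ker ω.curryLeft ≤ L) :
    finrank ℝ L = finrank ℝ (LinearMap.ker ω.curryLeft) + (finrank ℝ (V ⧸ L)).choose k := by
  rw [← Submodule.finrank_map_add_finrank_inf_ker ω.curryLeft L, hL.map_curryLeft,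
    finrank_formsVanishingOn, inf_eq_right.mpr hker, add_comm]

theorem IsPolyLag.le_ker_curryLeft_of_finrank_lt [FiniteDimensional ℝ V]
    {ω : V [⋀^Fin (k+1)]→ₗ[ℝ] ℝ} {L : Submodule ℝ V} (hL : IsPolyLag ω L)
    (hk : finrank ℝ (V ⧸ L) < k) : L ≤ LinearMap.ker ω.curryLeft := by
  rw [LinearMap.le_ker_iff_map, hL.map_curryLeft, ← Submodule.finrank_eq_zero,
    finrank_formsVanishingOn, Nat.choose_eq_zero_of_lt hk]

theorem IsPolyLag.finrank_inf_le [FiniteDimensional ℝ V] {ω : V [⋀^Fin (k+1)]→ₗ[ℝ] ℝ}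
    {L L' : Submodule ℝ V} (hL : IsPolyLag ω L) (hL' : IsIsotropic ω L') :
    finrank ℝ (L ⊓ L' : Submodule ℝ V) ≤
      finrank ℝ (LinearMap.ker ω.curryLeft) + (finrank ℝ (V ⧸ (L ⊔ L'))).choose k := by
  refine finrank_le_finrank_ker_curryLeft_add_choose ?_
  rw [formsVanishingOn_sup, ← hL.map_curryLeft]
  exact (Submodule.map_inf_le _).trans (inf_le_inf_left _ hL'.map_curryLeft_le)

theorem IsPolyLag.le_of_isIsotropic [FiniteDimensional ℝ V] {ω : V [⋀^Fin (k+1)]→ₗ[ℝ] ℝ}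
    {L L' : Submodule ℝ V} (hL : IsPolyLag ω L) (hL' : IsIsotropic ω L')
    (hker : LinearMap.ker ω.curryLeft ≤ L')
    (hdim : finrank ℝ (LinearMap.ker ω.curryLeft) + (finrank ℝ (V ⧸ L) - 1).choose k + 1
      < finrank ℝ L') :
    L' ≤ L := by
  have hL'bound := finrank_le_finrank_ker_curryLeft_add_choose hL'.map_curryLeft_le
  rcases k with _ | k
  · simp only [Nat.choose_zero_right] at hdim hL'bound
    omega
  by_contra hL'L
  have hd : finrank ℝ (L'.map L.mkQ) ≠ 0 := by
    rwa [Ne, Submodule.finrank_eq_zero, ← LinearMap.le_ker_iff_map, Submodule.ker_mkQ]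
  have hrank := Submodule.finrank_map_add_finrank_inf_ker L.mkQ L'
  rw [Submodule.ker_mkQ, inf_comm] at hrank
  have hsup := Submodule.finrank_sup_add_finrank_inf_eq L L'
  have hquot := Submodule.finrank_quotient_add_finrank (L ⊔ L')
  have hquotL := Submodule.finrank_quotient_add_finrank L
  have hinf := hL.finrank_inf_le hL'
  rcases lt_or_ge (finrank ℝ (V ⧸ L)) (k + 1) with hN | hN
  · have hLL' : L ≤ L' := (hL.le_ker_curryLeft_of_finrank_lt hN).trans hker
    have hquotL' := Submodule.finrank_quotient_add_finrank L'
    have := Submodule.finrank_mono hLL'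
    rw [Nat.choose_eq_zero_of_lt (by omega)] at hL'bound
    omega
  rcases k with _ | k
  · simp only [zero_add, Nat.choose_one_right] at hdim hinf
    omega
  have hd1 := hL.finrank_map_mkQ_le_one hL' hN
  have hq : finrank ℝ (V ⧸ (L ⊔ L')) = finrank ℝ (V ⧸ L) - 1 := by omega
  rw [hq] at hinf
  omega

theorem IsPolyLag.lt_finrank [FiniteDimensional ℝ V] {ω : V [⋀^Fin (k+3)]→ₗ[ℝ] ℝ}
    {L : Submodule ℝ V} (hL : IsPolyLag ω L) (hk : k + 2 < finrank ℝ (V ⧸ L)) :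
    finrank ℝ (LinearMap.ker ω.curryLeft) + (finrank ℝ (V ⧸ L) - 1).choose (k + 2) + 1
      < finrank ℝ L := by
  rw [hL.finrank_eq (hL.ker_curryLeft_le (by omega))]
  have := Nat.choose_sub_one_add_one_lt_choose hk
  omega

theorem IsPolyLag.le_of_isPolyLag [FiniteDimensional ℝ V] {ω : V [⋀^Fin (k+3)]→ₗ[ℝ] ℝ}
    {L L' : Submodule ℝ V} (hL : IsPolyLag ω L) (hL' : IsPolyLag ω L')
    (hN : finrank ℝ (V ⧸ L') = finrank ℝ (V ⧸ L)) (hk : k + 2 < finrank ℝ (V ⧸ L)) :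
    L' ≤ L :=
  hL.le_of_isIsotropic hL'.isIsotropic (hL'.ker_curryLeft_le (by omega))
    (hN ▸ hL'.lt_finrank (by omega))

end PolyLag

theorem stmt6_general {V : Type*} [AddCommGroup V] [Module ℝ V] [FiniteDimensional ℝ V]
    {k N : ℕ}
    (ω : V [⋀^Fin (k+1)]→ₗ[ℝ] ℝ)
    (L : Submodule ℝ V) (hL : IsPolyLag ω L) (hN : Module.finrank ℝ (V ⧸ L) = N) :
    (∀ L' : Submodule ℝ V,
        (∀ x : Fin (k+1) → V, x 0 ∈ L' → x 1 ∈ L' → ω x = 0) →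
        LinearMap.ker ω.curryLeft ≤ L' →
        Module.finrank ℝ ↥(LinearMap.ker ω.curryLeft) + (N - 1).choose k + 1
            < Module.finrank ℝ ↥L' →
        L' ≤ L)
      ∧ (k < N → 1 < k →
          ∀ L' : Submodule ℝ V, IsPolyLag ω L' →
            Module.finrank ℝ (V ⧸ L') = N → L' = L) := by
  subst hN
  refine ⟨fun L' hL' hker hdim => hL.le_of_isIsotropic hL' hker hdim,
    fun hkN hk L' hL' hN' => ?_⟩
  obtain ⟨k, rfl⟩ : ∃ j, k = j + 2 := ⟨k - 2, by omega⟩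
  exact le_antisymm (hL.le_of_isPolyLag hL' hN' hkN)
    (hL'.le_of_isPolyLag hL hN'.symm (hN' ▸ hkN))

/-- For a scalar polylagrangian `(k+1)`-form of rank `N` with polylagrangian subspace `L`:
every isotropic subspace `L'` containing `ker ω` with
`dim L' > dim ker ω + C(N−1,k) + 1` is contained in `L`; in particular, if `N > k > 1`,
the polylagrangian subspace (of rank `N`) is unique. -/
theorem stmt6 {V : Type*} [AddCommGroup V] [Module ℝ V] [FiniteDimensional ℝ V]
    {k N : ℕ}
    (ω : V [⋀^Fin (k+1)]→ₗ[ℝ] ℝ) (hω : ω ≠ 0)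
    (L : Submodule ℝ V) (hL : IsPolyLag ω L) (hN : Module.finrank ℝ (V ⧸ L) = N) :
    (∀ L' : Submodule ℝ V,
        (∀ x : Fin (k+1) → V, x 0 ∈ L' → x 1 ∈ L' → ω x = 0) →
        LinearMap.ker ω.curryLeft ≤ L' →
        Module.finrank ℝ ↥(LinearMap.ker ω.curryLeft) + (N - 1).choose k + 1
            < Module.finrank ℝ ↥L' →
        L' ≤ L)
      ∧ (k < N → 1 < k →
          ∀ L' : Submodule ℝ V, IsPolyLag ω L' →
            Module.finrank ℝ (V ⧸ L') = N → L' = L) :=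
  stmt6_general ω L hL hN
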